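/- For discrete (X, Y, R) with positivity, the joint distribution admits the odds ratio factorization f(y, r | x) = OR(y, r | x) f(y | R = 1, x) p(r | x, y_0) / C(x), where OR(y, r | x) = [p(r | x, y) p(R=1 | x, y_0)] / [p(r | x, y_0) p(R=1 | x, y)] and C(x) = Σ_{r'} E{OR(Y, r' | x) | R = 1, x} p(r' | x, y_0). -/

import Mathlib

open Finset
open scoped Classical

/-!
Write every conditional probability as a ratio of the joint masses
`q(r, y) = P(R = r, X = x, Y = y)`. The marginals `P(X = x, Y = y)` cancel in the odds ratio, and
`OR(y, r | x) f(y | R = 1, x) p(r | x, y₀) = q(r, y) · p(1 | x, y₀) / P(X = x, R = 1)`,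
a multiple of `q(r, y)` by a factor free of `y` and `r`. Since the `q(r, y)` sum to `P(X = x)`,
summing over `(y, r)` shows that `C(x)` is `P(X = x)` times that same factor.
-/

noncomputable def pr {Ω : Type*} [Fintype Ω] (μ : Ω → ℝ) (A : Ω → Prop) : ℝ :=
  ∑ ω, if A ω then μ ω else 0

noncomputable def cpr {Ω : Type*} [Fintype Ω] (μ : Ω → ℝ) (A B : Ω → Prop) : ℝ :=
  pr μ (fun ω => A ω ∧ B ω) / pr μ B

section

variable {Ω 𝒳 𝒴 : Type*} [Fintype Ω] [Fintype 𝒴] {p : ℕ}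

/-- The propensity `p(R = r | X = x, Y = y)` of missingness pattern `r`. -/
noncomputable def patProp (μ : Ω → ℝ) (X : Ω → 𝒳) (Y : Ω → Fin p → 𝒴)
    (R : Ω → Fin p → Bool) (r : Fin p → Bool) (x : 𝒳) (y : Fin p → 𝒴) : ℝ :=
  cpr μ (fun ω => ∀ j, R ω j = r j) (fun ω => X ω = x ∧ ∀ j, Y ω j = y j)

/-- The odds ratio function `OR(y, r | x)` with reference value `y₀`. -/
noncomputable def orFn (μ : Ω → ℝ) (X : Ω → 𝒳) (Y : Ω → Fin p → 𝒴)
    (R : Ω → Fin p → Bool) (y₀ : Fin p → 𝒴) (y : Fin p → 𝒴) (r : Fin p → Bool)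
    (x : 𝒳) : ℝ :=
  (patProp μ X Y R r x y * patProp μ X Y R (fun _ => true) x y₀) /
    (patProp μ X Y R r x y₀ * patProp μ X Y R (fun _ => true) x y)

/-- The baseline outcome density `f(y | R = 1, x)` of the complete cases. -/
noncomputable def baseOut (μ : Ω → ℝ) (X : Ω → 𝒳) (Y : Ω → Fin p → 𝒴)
    (R : Ω → Fin p → Bool) (y : Fin p → 𝒴) (x : 𝒳) : ℝ :=
  cpr μ (fun ω => ∀ j, Y ω j = y j) (fun ω => X ω = x ∧ ∀ j, R ω j = true)

end

section Probability

variable {Ω : Type*} [Fintype Ω] {μ : Ω → ℝ}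

theorem pr_congr {A B : Ω → Prop} (h : ∀ ω, A ω ↔ B ω) : pr μ A = pr μ B :=
  sum_congr rfl fun ω _ => by simp only [h ω]

theorem pr_nonneg (hμ : ∀ ω, 0 ≤ μ ω) (A : Ω → Prop) : 0 ≤ pr μ A :=
  sum_nonneg fun ω _ => by split_ifs <;> simp [hμ ω]

theorem pr_mono (hμ : ∀ ω, 0 ≤ μ ω) {A B : Ω → Prop} (h : ∀ ω, A ω → B ω) :
    pr μ A ≤ pr μ B :=
  sum_le_sum fun ω _ => by
    by_cases hA : A ω
    · simp [hA, h ω hA]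
    · by_cases hB : B ω <;> simp [hA, hB, hμ ω]

theorem sum_pr_eq_and {β : Type*} [Fintype β] (f : Ω → β) (A : Ω → Prop) :
    ∑ b, pr μ (fun ω => f ω = b ∧ A ω) = pr μ A := by
  unfold pr
  rw [sum_comm]
  refine sum_congr rfl fun ω _ => ?_
  by_cases hA : A ω <;> simp [hA]

end Probability

section OddsRatio

variable {Ω 𝒳 𝒴 : Type*} [Fintype Ω] {p : ℕ} (μ : Ω → ℝ) (X : Ω → 𝒳)
  (Y : Ω → Fin p → 𝒴) (R : Ω → Fin p → Bool)

noncomputable def jointMass (r : Fin p → Bool) (x : 𝒳) (y : Fin p → 𝒴) : ℝ :=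
  pr μ (fun ω => (∀ j, R ω j = r j) ∧ X ω = x ∧ ∀ j, Y ω j = y j)

theorem patProp_eq_jointMass_div (r : Fin p → Bool) (x : 𝒳) (y : Fin p → 𝒴) :
    patProp μ X Y R r x y =
      jointMass μ X Y R r x y / pr μ (fun ω => X ω = x ∧ ∀ j, Y ω j = y j) :=
  rfl

theorem baseOut_eq_jointMass_div (y : Fin p → 𝒴) (x : 𝒳) :
    baseOut μ X Y R y x = jointMass μ X Y R (fun _ => true) x y /
      pr μ (fun ω => X ω = x ∧ ∀ j, R ω j = true) := by
  unfold baseOut cpr jointMass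
  congr 1
  exact pr_congr fun ω => by tauto

theorem cpr_outcome_pattern_eq_jointMass_div (r : Fin p → Bool) (x : 𝒳) (y : Fin p → 𝒴) :
    cpr μ (fun ω => (∀ j, Y ω j = y j) ∧ ∀ j, R ω j = r j) (fun ω => X ω = x) =
      jointMass μ X Y R r x y / pr μ (fun ω => X ω = x) := by
  unfold cpr jointMass
  congr 1
  exact pr_congr fun ω => by tauto

theorem sum_sum_jointMass [Fintype 𝒴] (x : 𝒳) :
    ∑ r : Fin p → Bool, ∑ y : Fin p → 𝒴, jointMass μ X Y R r x y =
      pr μ (fun ω => X ω = x) := by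
  have hY : ∀ r, ∑ y : Fin p → 𝒴, jointMass μ X Y R r x y =
      pr μ (fun ω => R ω = r ∧ X ω = x) := fun r => by
    rw [← sum_pr_eq_and Y]
    exact sum_congr rfl fun y _ => pr_congr fun ω => by simp only [funext_iff]; tauto
  simp only [hY]
  exact sum_pr_eq_and R _

theorem pr_complete_cases_pos (hμ : ∀ ω, 0 ≤ μ ω) (x : 𝒳) (y₀ : Fin p → 𝒴)
    (hprop : patProp μ X Y R (fun _ => true) x y₀ ≠ 0) :
    0 < pr μ (fun ω => X ω = x ∧ ∀ j, R ω j = true) := by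
  have hmass : 0 < jointMass μ X Y R (fun _ => true) x y₀ :=
    (pr_nonneg hμ _).lt_of_ne (div_ne_zero_iff.mp hprop).1.symm
  exact hmass.trans_le (pr_mono hμ fun ω h => ⟨h.2.1, h.1⟩)

theorem orFn_mul_baseOut_mul_patProp (x : 𝒳) (y₀ y : Fin p → 𝒴) (r : Fin p → Bool)
    (hprop : ∀ r' y', patProp μ X Y R r' x y' ≠ 0)
    (hcomplete : pr μ (fun ω => X ω = x ∧ ∀ j, R ω j = true) ≠ 0) :
    orFn μ X Y R y₀ y r x * baseOut μ X Y R y x * patProp μ X Y R r x y₀ =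
      jointMass μ X Y R r x y *
        (patProp μ X Y R (fun _ => true) x y₀ /
          pr μ (fun ω => X ω = x ∧ ∀ j, R ω j = true)) := by
  simp only [orFn, patProp_eq_jointMass_div, baseOut_eq_jointMass_div] at hprop ⊢
  obtain ⟨h₁, h₂⟩ := div_ne_zero_iff.mp (hprop r y₀)
  obtain ⟨h₃, h₄⟩ := div_ne_zero_iff.mp (hprop (fun _ => true) y)
  field_simp

end OddsRatio

section

variable {Ω 𝒳 𝒴 : Type*} [Fintype Ω] [Fintype 𝒴] {p : ℕ}

theorem stmt8_general (μ : Ω → ℝ) (hμ0 : ∀ ω, 0 ≤ μ ω)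
    (X : Ω → 𝒳) (Y : Ω → Fin p → 𝒴) (R : Ω → Fin p → Bool)
    (x : 𝒳) (y₀ : Fin p → 𝒴)
    (hpos : ∀ (r' : Fin p → Bool) (y' : Fin p → 𝒴), patProp μ X Y R r' x y' > 0)
    (y : Fin p → 𝒴) (r : Fin p → Bool) :
    cpr μ (fun ω => (∀ j, Y ω j = y j) ∧ ∀ j, R ω j = r j) (fun ω => X ω = x)
      = orFn μ X Y R y₀ y r x * baseOut μ X Y R y x * patProp μ X Y R r x y₀ /
        ∑ r' : Fin p → Bool,
          (∑ y' : Fin p → 𝒴, orFn μ X Y R y₀ y' r' x * baseOut μ X Y R y' x) *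
            patProp μ X Y R r' x y₀ := by
  have hprop : ∀ r' y', patProp μ X Y R r' x y' ≠ 0 := fun r' y' => (hpos r' y').ne'
  have hcomplete := (pr_complete_cases_pos μ X Y R hμ0 x y₀ (hprop _ y₀)).ne'
  have hterm := fun r' y' => orFn_mul_baseOut_mul_patProp μ X Y R x y₀ y' r' hprop hcomplete
  set c := patProp μ X Y R (fun _ => true) x y₀ /
    pr μ (fun ω => X ω = x ∧ ∀ j, R ω j = true)
  have hc : c ≠ 0 := div_ne_zero (hprop _ y₀) hcomplete
  have hden : ∑ r' : Fin p → Bool,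
      (∑ y' : Fin p → 𝒴, orFn μ X Y R y₀ y' r' x * baseOut μ X Y R y' x) *
        patProp μ X Y R r' x y₀ = pr μ (fun ω => X ω = x) * c := by
    simp only [sum_mul, hterm]
    simp only [← sum_mul, sum_sum_jointMass]
  rw [cpr_outcome_pattern_eq_jointMass_div, hterm, hden, mul_div_mul_right _ _ hc]

/-- the odds ratio factorization of the joint distribution:
`f(y, r | x) = OR(y, r | x) f(y | R = 1, x) p(r | x, y₀) / C(x)` with
`C(x) = Σ_{r'} E{OR(Y, r' | x) | R = 1, x} p(r' | x, y₀)`. -/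
theorem stmt8 (μ : Ω → ℝ) (hμ0 : ∀ ω, 0 ≤ μ ω) (hμ1 : ∑ ω, μ ω = 1)
    (X : Ω → 𝒳) (Y : Ω → Fin p → 𝒴) (R : Ω → Fin p → Bool)
    (x : 𝒳) (y₀ : Fin p → 𝒴)
    (hsupp : ∀ y' : Fin p → 𝒴, pr μ (fun ω => X ω = x ∧ ∀ j, Y ω j = y' j) > 0)
    (hpos : ∀ (r' : Fin p → Bool) (y' : Fin p → 𝒴), patProp μ X Y R r' x y' > 0)
    (y : Fin p → 𝒴) (r : Fin p → Bool) :
    cpr μ (fun ω => (∀ j, Y ω j = y j) ∧ ∀ j, R ω j = r j) (fun ω => X ω = x)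
      = orFn μ X Y R y₀ y r x * baseOut μ X Y R y x * patProp μ X Y R r x y₀ /
        ∑ r' : Fin p → Bool,
          (∑ y' : Fin p → 𝒴, orFn μ X Y R y₀ y' r' x * baseOut μ X Y R y' x) *
            patProp μ X Y R r' x y₀ :=
  stmt8_general μ hμ0 X Y R x y₀ hpos y r

end
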